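/- Let L, m be positive integers, let γ ≥ 0 be a real number, and for each l ∈ {1,…,L} let G_l ∈ ℂ^{m × m} be a positive semidefinite Hermitian matrix. Define Q_0 = I_m and Q_l = Q_{l-1} + γ · G_l for l = 1,…,L, and set E_l = I_m + γ · Q_{l-1}⁻¹ G_l for l = 1,…,L. Then Q_L = E_1 · E_2 · ⋯ · E_L, i.e., I_m + γ · Σ_{l=1}^{L} G_l equals the ordered product E_1 E_2 ⋯ E_L. -/

import Mathlib

open Matrix BigOperators
open scoped ComplexOrder

theorem eq_mul_prod_ofFn_of_succ_eq_mul {M : Type*} [Monoid M] {n : ℕ} (Q : ℕ → M)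
    (E : Fin n → M) (hQ : ∀ l : Fin n, Q (l + 1) = Q l * E l) :
    Q n = Q 0 * (List.ofFn E).prod := by
  induction n with
  | zero => simp
  | succ k ih =>
    rw [List.ofFn_succ', List.prod_concat, ← mul_assoc,
      ← ih (fun i => E i.castSucc) fun l => hQ l.castSucc]
    exact hQ (Fin.last k)

theorem eq_add_sum_of_succ_eq_add {M : Type*} [AddCommGroup M] {n : ℕ} (Q : ℕ → M)
    (G : Fin n → M) (hQ : ∀ l : Fin n, Q (l + 1) = Q l + G l) :
    Q n = Q 0 + ∑ l, G l := by
  have hG : ∀ l : Fin n, G l = Q (l + 1) - Q l := fun l => by rw [hQ l, add_sub_cancel_left]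
  simp only [hG, Fin.sum_univ_eq_sum_range (fun i => Q (i + 1) - Q i), Finset.sum_range_sub,
    add_sub_cancel]

theorem Matrix.posDef_of_succ_eq_add_posSemidef {ι 𝕜 : Type*} [Fintype ι] [RCLike 𝕜] {n : ℕ}
    (Q : ℕ → Matrix ι ι 𝕜) (G : Fin n → Matrix ι ι 𝕜) (h0 : (Q 0).PosDef)
    (hG : ∀ l, (G l).PosSemidef) (hQ : ∀ l : Fin n, Q (l + 1) = Q l + G l) :
    ∀ l ≤ n, (Q l).PosDef := by
  intro l
  induction l with
  | zero => exact fun _ => h0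
  | succ k ih =>
    intro hk
    rw [hQ ⟨k, hk⟩]
    exact (ih (Nat.le_of_succ_le hk)).add_posSemidef (hG ⟨k, hk⟩)

theorem Matrix.mul_one_add_smul_inv_mul {ι R : Type*} [Fintype ι] [DecidableEq ι] [CommRing R]
    {A : Matrix ι ι R} (hA : IsUnit A.det) (c : R) (G : Matrix ι ι R) :
    A * (1 + c • (A⁻¹ * G)) = A + c • G := by
  rw [mul_add, mul_one, Matrix.mul_smul, ← Matrix.mul_assoc, mul_nonsing_inv A hA, one_mul]

theorem stmt_3_general (L m : ℕ) (γ : ℝ) (hγ : 0 ≤ γ)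
    (G : Fin L → Matrix (Fin m) (Fin m) ℂ)
    (hG : ∀ l : Fin L, (G l).PosSemidef)
    (Q : ℕ → Matrix (Fin m) (Fin m) ℂ)
    (hQ0 : Q 0 = 1)
    (hQrec : ∀ l : Fin L, Q ((l : ℕ) + 1) = Q (l : ℕ) + (γ : ℂ) • G l)
    (E : Fin L → Matrix (Fin m) (Fin m) ℂ)
    (hE : ∀ l : Fin L, E l = 1 + (γ : ℂ) • ((Q (l : ℕ))⁻¹ * G l)) :
    Q L = (List.ofFn fun l : Fin L => E l).prod ∧
      Q L = 1 + (γ : ℂ) • ∑ l : Fin L, G l := by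
  have hPD : ∀ l ≤ L, (Q l).PosDef :=
    posDef_of_succ_eq_add_posSemidef Q _ (hQ0 ▸ .one)
      (fun l => (hG l).smul (by exact_mod_cast hγ : (0 : ℂ) ≤ γ)) hQrec
  have hstep : ∀ l : Fin L, Q (l + 1) = Q l * E l := fun l => by
    rw [hE l, mul_one_add_smul_inv_mul ((hPD l l.2.le).isUnit.map detMonoidHom) _ _, hQrec l]
  constructor
  · simpa [hQ0] using eq_mul_prod_ofFn_of_succ_eq_mul Q E hstep
  · simpa [hQ0, Finset.smul_sum] using eq_add_sum_of_succ_eq_add Q _ hQrec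

/-- The telescoping factorization (equation (15) in the paper):
`Q_L = I_m + γ Σ_{l=1}^L G_l` equals the ordered product `E_1 E_2 ⋯ E_L`, where
`E_l = I_m + γ Q_{l-1}⁻¹ G_l`. -/
theorem stmt_3 (L m : ℕ) (hL : 0 < L) (hm : 0 < m) (γ : ℝ) (hγ : 0 ≤ γ)
    (G : Fin L → Matrix (Fin m) (Fin m) ℂ)
    (hG : ∀ l : Fin L, (G l).PosSemidef)
    (Q : ℕ → Matrix (Fin m) (Fin m) ℂ)
    (hQ0 : Q 0 = 1)
    (hQrec : ∀ l : Fin L, Q ((l : ℕ) + 1) = Q (l : ℕ) + (γ : ℂ) • G l)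
    (E : Fin L → Matrix (Fin m) (Fin m) ℂ)
    (hE : ∀ l : Fin L, E l = 1 + (γ : ℂ) • ((Q (l : ℕ))⁻¹ * G l)) :
    Q L = (List.ofFn fun l : Fin L => E l).prod ∧
      Q L = 1 + (γ : ℂ) • ∑ l : Fin L, G l :=
  stmt_3_general L m γ hγ G hG Q hQ0 hQrec E hE
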